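/- There exists M ∈ ℕ such that for all k ≥ M, φ̃(N_k) > k, where N_k is the product of the first k primes. (In fact one may take M = 4.) -/

import Mathlib

/-!
The numbers `p_k * p_{k+j}` for `0 ≤ j ≤ k` are `k + 1` distinct composites built from primes
not dividing `N_k`, so they are counted by `φ̃(N_k)` as soon as the largest of them, `p_k p_{2k}`,
is at most `N_k`. Bertrand's postulate gives `p_n ≤ 2^(n+1)`, so `p_k p_{2k} ≤ 4 · 8^k`, while
`N_k ≥ (k+1)!` because `p_i ≥ i + 2`; the factorial eventually wins.
-/

/-- φ̃(n): number of m with 1 ≤ m ≤ n, gcd(m,n)=1, m not prime. -/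
def phiT (n : ℕ) : ℕ :=
  ((Finset.Icc 1 n).filter (fun m => Nat.gcd m n = 1 ∧ ¬ m.Prime)).card

/-- The product of the first k primes. -/
noncomputable def primorialN (k : ℕ) : ℕ := ∏ i ∈ Finset.range k, Nat.nth Nat.Prime i

open Nat Finset Filter

lemma nth_prime_succ_le_two_mul (n : ℕ) : nth Nat.Prime (n + 1) ≤ 2 * nth Nat.Prime n := by
  obtain ⟨q, hq, hlt, hle⟩ :=
    exists_prime_lt_and_le_two_mul (nth Nat.Prime n) (prime_nth_prime n).ne_zero
  by_contra! h
  have := le_nth_of_lt_nth_succ (hle.trans_lt h) hq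
  omega

lemma nth_prime_le_two_pow (n : ℕ) : nth Nat.Prime n ≤ 2 ^ (n + 1) := by
  induction n with
  | zero => simp
  | succ n ih =>
    calc nth Nat.Prime (n + 1) ≤ 2 * nth Nat.Prime n := nth_prime_succ_le_two_mul n
      _ ≤ 2 ^ (n + 2) := by rw [pow_succ']; omega

lemma factorial_succ_le_primorialN (k : ℕ) : (k + 1)! ≤ primorialN k := by
  induction k with
  | zero => simp [primorialN]
  | succ k ih =>
    rw [primorialN, prod_range_succ, ← primorialN, factorial_succ, mul_comm]
    exact Nat.mul_le_mul ih (add_two_le_nth_prime k)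

lemma eventually_nth_prime_mul_nth_prime_two_mul_le_primorialN :
    ∀ᶠ k in atTop, nth Nat.Prime k * nth Nat.Prime (2 * k) ≤ primorialN k := by
  filter_upwards [eventually_pow_lt_factorial_sub 16 0, eventually_ge_atTop 2] with k hfac hk
  calc nth Nat.Prime k * nth Nat.Prime (2 * k)
      ≤ 2 ^ (k + 1) * 2 ^ (2 * k + 1) :=
        Nat.mul_le_mul (nth_prime_le_two_pow k) (nth_prime_le_two_pow (2 * k))
    _ = 2 ^ 2 * 8 ^ k := by rw [show 8 = 2 ^ 3 by rfl, ← pow_mul]; ring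
    _ ≤ 2 ^ k * 8 ^ k := Nat.mul_le_mul_right _ (Nat.pow_le_pow_right two_pos hk)
    _ = 16 ^ k := by rw [← mul_pow]; norm_num
    _ ≤ k ! := hfac.le
    _ ≤ (k + 1)! := factorial_le (le_succ k)
    _ ≤ primorialN k := factorial_succ_le_primorialN k

lemma coprime_nth_prime_primorialN {k m : ℕ} (hm : k ≤ m) :
    Coprime (nth Nat.Prime m) (primorialN k) := by
  refine Coprime.prod_right fun i hi => ?_
  rw [coprime_primes (prime_nth_prime m) (prime_nth_prime i)]
  intro h
  have := nth_injective infinite_setOfPred_prime h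
  have := mem_range.mp hi
  omega

lemma card_le_phiT {ι : Type*} {n : ℕ} (s : Finset ι) (f : ι → ℕ) (hf : Set.InjOn f s)
    (hs : ∀ i ∈ s, 1 ≤ f i ∧ f i ≤ n ∧ Coprime (f i) n ∧ ¬ (f i).Prime) :
    #s ≤ phiT n := by
  refine card_le_card_of_injOn f (fun i hi => ?_) hf
  obtain ⟨h1, hn, hcop, hnp⟩ := hs i hi
  exact mem_filter.mpr ⟨mem_Icc.mpr ⟨h1, hn⟩, hcop, hnp⟩

theorem stmt10 : ∃ M : ℕ, ∀ k ≥ M, phiT (primorialN k) > k := by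
  refine eventually_atTop.mp ?_
  filter_upwards [eventually_nth_prime_mul_nth_prime_two_mul_le_primorialN] with k hk
  have hp := prime_nth_prime
  suffices #(range (k + 1)) ≤ phiT (primorialN k) by simpa using this
  refine card_le_phiT _ (fun j => nth Nat.Prime k * nth Nat.Prime (k + j))
    (fun a _ b _ hab => ?_) fun j hj => ⟨Nat.mul_pos (hp k).pos (hp _).pos, ?_, ?_, ?_⟩
  · simpa using nth_injective infinite_setOfPred_prime (Nat.eq_of_mul_eq_mul_left (hp k).pos hab)
  · have hj : k + j ≤ 2 * k := by have := mem_range.mp hj; omega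
    exact (Nat.mul_le_mul_left _ ((nth_le_nth infinite_setOfPred_prime).mpr hj)).trans hk
  · exact (coprime_nth_prime_primorialN le_rfl).mul_left
      (coprime_nth_prime_primorialN (le_add_right k j))
  · exact not_prime_mul (hp k).one_lt.ne' (hp _).one_lt.ne'
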